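/- Let A^α be the Levi type subalgebra of the cellular algebra A. For λ ∈ Λ⁺, the restriction of the standard A-module W^λ to A^α decomposes as W^λ ≅ Z^{(λ,0)} ⊕ Z^{(λ,1)} (standard A^α-modules, with the convention Z^{(λ,ε)} = 0 when (λ,ε) ∉ Ω), via c^λ_t ↦ c^{(λ,ε)}_t for t ∈ I(λ,ε); moreover L^λ ≅ L^{(λ,0)} ⊕ L^{(λ,1)} as A^α-modules. -/

import Mathlib

/-!
Each `t ∈ T(λ)` lies in `T(λ,μ)` for exactly one `μ` (the `e μ` are orthogonal and `c^λ_{tt} ≠ 0`),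
and `κ μ ≤ ι λ` because `e μ` lies in the ideal spanned by the cells `λ'` with `κ μ ≤ ι λ'`. As `α`
is monotone, `T(λ)` is therefore the disjoint union of `T⁺_α(λ)` and `T⁻_α(λ)`, and restriction of
functions splits `W^λ` as `Z^{(λ,0)} ⊕ Z^{(λ,1)}` over `R`. The splitting is `A^α`-linear because
no generator `c^{λ'}_{s't'}` of `A^α` moves a column of one part into the other: either a mismatch
of idempotents kills `c^λ_{tt} c^{λ'}_{s't'}`, or `α(ι λ) < α(ι λ')` and the product lies in cells
strictly above `λ`. By the same orthogonality the form `φ_λ` is block diagonal, so the radical of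
`W^λ` is the sum of the radicals of the two pieces and the decomposition passes to the heads.
-/

open MulOpposite

noncomputable section

universe u

section CompFactors

variable (A : Type u) [Ring A]

/-- The `i`-th factor of a series of submodules. -/
abbrev CompSeriesFactor {M : Type u} [AddCommGroup M] [Module A M]
    (s : CompositionSeries (Submodule A M)) (i : Fin s.length) : Type u :=
  ↥(s i.succ) ⧸ Submodule.comap (s i.succ).subtype (s i.castSucc)

open Classical in
/-- The multiplicity of `N` among the composition factors of `M` (returning `0` if `M`
has no composition series); by the Jordan–Hölder theorem this does not depend on the
choice of composition series. -/
def compMult (M : Type u) [AddCommGroup M] [Module A M]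
    (N : Type u) [AddCommGroup N] [Module A N] : ℕ :=
  if h : ∃ s : CompositionSeries (Submodule A M), s.head = ⊥ ∧ s.last = ⊤ then
    (Finset.univ.filter fun i : Fin h.choose.length =>
      Nonempty (CompSeriesFactor A h.choose i ≃ₗ[A] N)).card
  else 0

/-- `N` is (isomorphic to) a composition factor, i.e. a simple subquotient, of `M`. -/
def IsCompFactor (M N : Type u) [AddCommGroup M] [Module A M]
    [AddCommGroup N] [Module A N] : Prop :=
  ∃ p q : Submodule A M, p ≤ q ∧
    IsSimpleModule A (↥q ⧸ Submodule.comap q.subtype p) ∧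
    Nonempty ((↥q ⧸ Submodule.comap q.subtype p) ≃ₗ[A] N)

/-- `M₁` and `M₂` have a common composition factor. -/
def ShareFactor (M₁ M₂ : Type u) [AddCommGroup M₁] [Module A M₁]
    [AddCommGroup M₂] [Module A M₂] : Prop :=
  ∃ (p q : Submodule A M₁) (p' q' : Submodule A M₂), p ≤ q ∧ p' ≤ q' ∧
    IsSimpleModule A (↥q ⧸ Submodule.comap q.subtype p) ∧
    Nonempty ((↥q ⧸ Submodule.comap q.subtype p) ≃ₗ[A]
      (↥q' ⧸ Submodule.comap q'.subtype p'))

/-- `e` is a primitive central idempotent (a block idempotent) of `A`. -/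
def IsPrimCentralIdem (e : A) : Prop :=
  IsIdempotentElem e ∧ e ∈ Set.center A ∧ e ≠ 0 ∧
    ∀ f g : A, IsIdempotentElem f → IsIdempotentElem g → f ∈ Set.center A →
      g ∈ Set.center A → f * g = 0 → e = f + g → f = 0 ∨ g = 0

/-- A module belongs to the block of the central idempotent `e` when `e` acts as
the identity on it. -/
def InBlock (e : A) (M : Type u) [AddCommGroup M] [Module A M] : Prop :=
  ∀ m : M, e • m = m

/-- `P` is a projective cover of `L`. -/
def IsProjCover (P L : Type u) [AddCommGroup P] [Module A P]
    [AddCommGroup L] [Module A L] : Prop :=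
  Module.Projective A P ∧ ∃ f : P →ₗ[A] L, Function.Surjective f ∧
    ∀ N : Submodule A P, N ⊔ LinearMap.ker f = ⊤ → N = ⊤

end CompFactors

/-- The bilinear form on `ι → R` induced by a matrix `φ`. -/
def formSum {R ι : Type u} [CommRing R] [Fintype ι] (φ : ι → ι → R) (x y : ι → R) : R :=
  ∑ s, ∑ t, x s * φ s t * y t

section Cellular

variable (R A : Type u) [CommRing R] [Ring A] [Algebra R A]
variable (Λp : Type u) [PartialOrder Λp] (T : Λp → Type u) [∀ l, Fintype (T l)]

/-- A cell datum (Graham–Lehrer) for the `R`-algebra `A`: a cellular basis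
`c l s t` indexed by pairs of elements of `T l` for `l` in the poset `Λp`, an
anti-automorphism `star` swapping the two indices, and structure constants
`coeff` for right multiplication, acting on the second index modulo higher terms. -/
structure CellDatum where
  c : ∀ l, T l → T l → A
  basis : Module.Basis ((l : Λp) × (T l × T l)) R A
  basis_eq : ∀ l s t, basis ⟨l, (s, t)⟩ = c l s t
  star : A →ₗ[R] A
  star_mul : ∀ a b, star (a * b) = star b * star a
  star_c : ∀ l s t, star (c l s t) = c l t s
  coeff : ∀ l, T l → A → T l → R
  mul_rule : ∀ (l) (s t : T l) (a : A),
    c l s t * a - ∑ v, coeff l t a v • c l s v ∈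
      Submodule.span R {x : A | ∃ l' s' t', l < l' ∧ x = c l' s' t'}

variable {R A Λp T}

namespace CellDatum

variable (D : CellDatum R A Λp T)

/-- The span of the cellular basis elements with index strictly above `l`. -/
def Aup (l : Λp) : Submodule R A :=
  Submodule.span R {x : A | ∃ l' s' t', l < l' ∧ x = D.c l' s' t'}

/-- The span of the cellular basis elements with index in `P`. -/
def cellSpan (P : Set Λp) : Submodule R A :=
  Submodule.span R {x : A | ∃ l s t, l ∈ P ∧ x = D.c l s t}

/-- The data of right standard (cell) modules: each `T l → R` is a right `A`-module
(i.e. a module over `Aᵐᵒᵖ`), the action is `R`-bilinear, and on the standard basis it is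
given by the structure constants of the cell datum. -/
def RightStd [∀ l, DecidableEq (T l)] [∀ l, Module Aᵐᵒᵖ (T l → R)] : Prop :=
  (∀ (l : Λp) (r : R) (a : Aᵐᵒᵖ) (x : T l → R), a • (r • x) = r • (a • x)) ∧
  (∀ (l : Λp) (t : T l) (a : A),
    (op a) • (Pi.single t 1 : T l → R) = fun v => D.coeff l t a v)

/-- The data of left standard (cell) modules. -/
def LeftStd [∀ l, DecidableEq (T l)] [∀ l, Module A (T l → R)] : Prop :=
  (∀ (l : Λp) (r : R) (a : A) (x : T l → R), a • (r • x) = r • (a • x)) ∧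
  (∀ (l : Λp) (t : T l) (a : A),
    a • (Pi.single t 1 : T l → R) = fun v => D.coeff l t (D.star a) v)

/-- `φ` is the matrix of the canonical bilinear form on the standard modules:
`c l u s * c l t v ≡ φ l s t • c l u v` modulo `A^{∨l}`. -/
def FormData (φ : ∀ l, T l → T l → R) : Prop :=
  ∀ (l : Λp) (s t u v : T l), D.c l u s * D.c l t v - φ l s t • D.c l u v ∈ D.Aup l

section Idem

variable {Λt M X : Type u} [PartialOrder Λt] [PartialOrder X] [Fintype M]

/-- Assumptions (A1)–(A4): `ι : Λp → Λt` realizes the cell poset inside the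
bigger poset `Λt`, `κ : M → Λt` realizes the index set of the orthogonal idempotent
decomposition `1 = ∑ e μ`, each `e μ` lies in the span of the `c l s t` with
`ι l ≥ κ μ`, and every column of the cellular basis is fixed by some `e μ`. -/
structure IdemData (ι : Λp → Λt) (κ : M → Λt) (e : M → A) : Prop where
  order_iff : ∀ l l', ι l ≤ ι l' ↔ l ≤ l'
  kappa_inj : Function.Injective κ
  ne_zero : ∀ μ, e μ ≠ 0
  idem : ∀ μ, e μ * e μ = e μ
  orth : ∀ μ ν, μ ≠ ν → e μ * e ν = 0
  sum_one : ∑ μ, e μ = 1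
  mem_span : ∀ μ, e μ ∈ Submodule.span R {x : A | ∃ l s t, κ μ ≤ ι l ∧ x = D.c l s t}
  exists_idem : ∀ (l) (t : T l), ∃ μ, (∀ s, D.c l s t * e μ = D.c l s t) ∧
    (∀ u, e μ * D.c l t u = D.c l t u)

/-- `T(λ,μ)`: the indices `t` whose column (resp. row) of the cellular basis is fixed
by right (resp. left) multiplication by `e μ`. -/
def Tset (e : M → A) (l : Λp) (μ : M) : Set (T l) :=
  {t | (∀ s, D.c l s t * e μ = D.c l s t) ∧ (∀ u, e μ * D.c l t u = D.c l t u)}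

/-- `T⁺_α(λ)`. -/
def Tplus (e : M → A) (ι : Λp → Λt) (κ : M → Λt) (α : Λt → X) (l : Λp) : Set (T l) :=
  {t | ∃ μ, t ∈ D.Tset e l μ ∧ α (ι l) = α (κ μ)}

/-- `T⁻_α(λ)`. -/
def Tminus (e : M → A) (ι : Λp → Λt) (κ : M → Λt) (α : Λt → X) (l : Λp) : Set (T l) :=
  {t | ∃ μ, t ∈ D.Tset e l μ ∧ α (κ μ) < α (ι l)}

/-- `I(λ,ε)`: `T⁺_α(λ)` for `ε = false` and `T⁻_α(λ)` for `ε = true`. -/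
def Iset (e : M → A) (ι : Λp → Λt) (κ : M → Λt) (α : Λt → X) (l : Λp) : Bool → Set (T l)
  | false => D.Tplus e ι κ α l
  | true => D.Tminus e ι κ α l

/-- `J̃(λ,ε)`: `T⁺_α(λ)` for `ε = false` and all of `T(λ)` for `ε = true`. -/
def Jset (e : M → A) (ι : Λp → Λt) (κ : M → Λt) (α : Λt → X) (l : Λp) : Bool → Set (T l)
  | false => D.Tplus e ι κ α l
  | true => Set.univ

/-- The Levi type subalgebra `A^α` (as a submodule). -/
def levi (e : M → A) (ι : Λp → Λt) (κ : M → Λt) (α : Λt → X) : Submodule R A :=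
  Submodule.span R {x : A | ∃ l ε s t, s ∈ D.Iset e ι κ α l ε ∧ t ∈ D.Iset e ι κ α l ε ∧
    x = D.c l s t}

/-- The parabolic type subalgebra `Ã^α` (as a submodule). -/
def parab (e : M → A) (ι : Λp → Λt) (κ : M → Λt) (α : Λt → X) : Submodule R A :=
  Submodule.span R {x : A | ∃ l ε s t, s ∈ D.Iset e ι κ α l ε ∧ t ∈ D.Jset e ι κ α l ε ∧
    x = D.c l s t}

/-- The span of the elements of the cellular basis of `A^α` of index strictly
above `(l,ε)` in `Ω`. -/
def upperOm (e : M → A) (ι : Λp → Λt) (κ : M → Λt) (α : Λt → X) (p : Λp × Bool) :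
    Submodule R A :=
  Submodule.span R {x : A | ∃ (q : Λp × Bool) (s t : T q.1),
    ((p.2 < q.2) ∨ (p.2 = q.2 ∧ p.1 < q.1)) ∧
    s ∈ D.Iset e ι κ α q.1 q.2 ∧ t ∈ D.Iset e ι κ α q.1 q.2 ∧ x = D.c q.1 s t}

/-- The span of the elements of the standard basis of `Ã^α` of index strictly
above `(l,ε)` in `Ω`. -/
def upperOmParab (e : M → A) (ι : Λp → Λt) (κ : M → Λt) (α : Λt → X) (p : Λp × Bool) :
    Submodule R A :=
  Submodule.span R {x : A | ∃ (q : Λp × Bool) (s t : T q.1),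
    ((p.2 < q.2) ∨ (p.2 = q.2 ∧ p.1 < q.1)) ∧
    s ∈ D.Iset e ι κ α q.1 q.2 ∧ t ∈ D.Jset e ι κ α q.1 q.2 ∧ x = D.c q.1 s t}

end Idem

end CellDatum

end Cellular

section PiSplit

variable {ι : Type*} {p q : Set ι}

theorem bijective_sumElim_val_of_isCompl (h : IsCompl p q) :
    Function.Bijective (Sum.elim (Subtype.val : p → ι) (Subtype.val : q → ι)) := by
  refine ⟨Subtype.val_injective.sumElim Subtype.val_injective fun a b hab => ?_, fun t => ?_⟩
  · exact Set.disjoint_left.1 h.disjoint a.2 (hab ▸ b.2)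
  · rcases h.sup_eq_top.ge (Set.mem_univ t) with ht | ht
    exacts [⟨Sum.inl ⟨t, ht⟩, rfl⟩, ⟨Sum.inr ⟨t, ht⟩, rfl⟩]

theorem sum_eq_add_of_isCompl [Fintype ι] [Fintype p] [Fintype q] {N : Type*} [AddCommMonoid N]
    (h : IsCompl p q) (f : ι → N) : ∑ i, f i = ∑ i : p, f i + ∑ i : q, f i :=
  ((Equiv.ofBijective _ (bijective_sumElim_val_of_isCompl h)).sum_comp f).symm.trans
    (Fintype.sum_sum_type _)

variable (R : Type*) [CommRing R]

def arrowProdEquivOfIsCompl (h : IsCompl p q) : (ι → R) ≃ₗ[R] (p → R) × (q → R) :=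
  (LinearEquiv.funCongrLeft R R (Equiv.ofBijective _ (bijective_sumElim_val_of_isCompl h))).trans
    (LinearEquiv.sumArrowLequivProdArrow p q R R)

variable {R}

theorem arrowProdEquivOfIsCompl_apply (h : IsCompl p q) (x : ι → R) :
    arrowProdEquivOfIsCompl R h x = (fun s : p => x s, fun s : q => x s) := rfl

theorem arrowProdEquivOfIsCompl_single_left [DecidableEq ι] (h : IsCompl p q) {t : ι}
    (ht : t ∈ p) : arrowProdEquivOfIsCompl R h (Pi.single t 1) = (Pi.single ⟨t, ht⟩ 1, 0) := by
  have hq (s : q) : (s : ι) ≠ t := fun hs => Set.disjoint_left.1 h.disjoint ht (hs ▸ s.2)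
  ext s
  · simp [arrowProdEquivOfIsCompl_apply, Pi.single_apply, Subtype.ext_iff]
  · simp [arrowProdEquivOfIsCompl_apply, hq s]

theorem arrowProdEquivOfIsCompl_single_right [DecidableEq ι] (h : IsCompl p q) {t : ι}
    (ht : t ∈ q) : arrowProdEquivOfIsCompl R h (Pi.single t 1) = (0, Pi.single ⟨t, ht⟩ 1) := by
  simpa [arrowProdEquivOfIsCompl_apply, and_comm] using
    arrowProdEquivOfIsCompl_single_left (R := R) h.symm ht

end PiSplit

section FormSplit

variable {ι R : Type u} [CommRing R] [Fintype ι] {p q : Set ι} [Fintype p] [Fintype q]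
  {φ : ι → ι → R}

theorem formSum_eq_add_of_isCompl (h : IsCompl p q)
    (hφ : ∀ s ∈ p, ∀ t ∈ q, φ s t = 0 ∧ φ t s = 0) (x y : ι → R) :
    formSum φ x y = formSum (fun s t : p => φ s t) (fun s : p => x s) (fun s : p => y s) +
      formSum (fun s t : q => φ s t) (fun s : q => x s) (fun s : q => y s) := by
  have h₁ (s : p) (t : q) : φ s t = 0 := (hφ s s.2 t t.2).1
  have h₂ (s : q) (t : p) : φ s t = 0 := (hφ t t.2 s s.2).2
  simp [formSum, sum_eq_add_of_isCompl h, h₁, h₂]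

theorem forall_formSum_eq_zero_iff_of_isCompl (h : IsCompl p q)
    (hφ : ∀ s ∈ p, ∀ t ∈ q, φ s t = 0 ∧ φ t s = 0) (x : ι → R) :
    (∀ y, formSum φ x y = 0) ↔
      (∀ y, formSum (fun s t : p => φ s t) (fun s : p => x s) y = 0) ∧
        (∀ y, formSum (fun s t : q => φ s t) (fun s : q => x s) y = 0) := by
  have hsplit (y₁ : p → R) (y₂ : q → R) :
      formSum φ x ((arrowProdEquivOfIsCompl R h).symm (y₁, y₂)) =
        formSum (fun s t : p => φ s t) (fun s : p => x s) y₁ +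
          formSum (fun s t : q => φ s t) (fun s : q => x s) y₂ := by
    obtain ⟨h₁, h₂⟩ := Prod.ext_iff.1 ((arrowProdEquivOfIsCompl R h).apply_symm_apply (y₁, y₂))
    rw [formSum_eq_add_of_isCompl h hφ]
    exact congrArg₂ (· + ·) (congrArg _ h₁) (congrArg _ h₂)
  refine ⟨fun H => ⟨fun y => ?_, fun y => ?_⟩, fun ⟨H₁, H₂⟩ y => ?_⟩
  · have hy := hsplit y 0
    rw [H] at hy
    simpa [formSum] using hy.symm
  · have hy := hsplit 0 y
    rw [H] at hy
    simpa [formSum] using hy.symm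
  · rw [formSum_eq_add_of_isCompl h hφ, H₁, H₂, add_zero]

end FormSplit

theorem LinearMap.map_smul_of_map_smul_single {ι R S N : Type*} [Fintype ι] [DecidableEq ι]
    [CommSemiring R] [Monoid S] [AddCommMonoid N] [Module R N]
    [DistribMulAction S (ι → R)] [DistribMulAction S N]
    [SMulCommClass S R (ι → R)] [SMulCommClass S R N] (f : (ι → R) →ₗ[R] N)
    (h : ∀ (a : S) (i : ι), f (a • Pi.single i 1) = a • f (Pi.single i 1)) (a : S)
    (x : ι → R) : f (a • x) = a • f x := by
  have hf : f ∘ₗ DistribSMul.toLinearMap R _ a = DistribSMul.toLinearMap R _ a ∘ₗ f :=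
    (Pi.basisFun R ι).ext fun i => by simpa using h a i
  exact LinearMap.congr_fun hf x

section QuotientCompHom

variable {S S' M N : Type*} [Ring S] [Ring S'] [AddCommGroup M] [Module S' M]
  [AddCommGroup N] [Module S N]

def Submodule.quotientCompHomEquiv (σ : S →+* S') (P : Submodule S' M) (f : M →+ N)
    (hf : Function.Surjective f) (hker : ∀ m, f m = 0 ↔ m ∈ P)
    (hsmul : ∀ (s : S) (m : M), f (σ s • m) = s • f m) :
    letI := Module.compHom (M ⧸ P) σ
    (M ⧸ P) ≃ₗ[S] N :=
  letI := Module.compHom (M ⧸ P) σ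
  let g : (M ⧸ P) →ₗ[S] N :=
    { toFun := QuotientAddGroup.lift P.toAddSubgroup f fun m hm => (hker m).2 hm
      map_add' := map_add _
      map_smul' := by rintro s ⟨m⟩; exact hsmul s m }
  LinearEquiv.ofBijective g
    ⟨(injective_iff_map_eq_zero g).2 fun q => q.inductionOn fun m hm =>
        (Submodule.Quotient.mk_eq_zero P).2 ((hker m).1 hm),
     fun n => let ⟨m, hm⟩ := hf n; ⟨Submodule.Quotient.mk m, hm⟩⟩

end QuotientCompHom

namespace CellDatum

variable {R A : Type u} [CommRing R] [Ring A] [Algebra R A]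
  {Λp : Type u} [PartialOrder Λp] {T : Λp → Type u} [∀ l, Fintype (T l)]
  (D : CellDatum R A Λp T)

theorem cellSpan_eq_span_basis (P : Set Λp) :
    D.cellSpan P = Submodule.span R (D.basis '' {i | i.1 ∈ P}) := by
  rw [cellSpan]
  congr 1
  ext x
  constructor
  · rintro ⟨l, s, t, hl, rfl⟩
    exact ⟨⟨l, (s, t)⟩, hl, D.basis_eq _ _ _⟩
  · rintro ⟨⟨l, s, t⟩, hl, rfl⟩
    exact ⟨l, s, t, hl, D.basis_eq _ _ _⟩

theorem cellSpan_mono {P Q : Set Λp} (h : P ⊆ Q) : D.cellSpan P ≤ D.cellSpan Q :=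
  Submodule.span_mono fun _ ⟨l, s, t, hl, hx⟩ => ⟨l, s, t, h hl, hx⟩

theorem c_mem_cellSpan {P : Set Λp} {l : Λp} (hl : l ∈ P) (s t : T l) :
    D.c l s t ∈ D.cellSpan P :=
  Submodule.subset_span ⟨l, s, t, hl, rfl⟩

theorem eq_zero_of_sum_smul_c_mem_cellSpan {P : Set Λp} {l : Λp} (hl : l ∉ P) {s : T l}
    {r : T l → R} (h : ∑ v, r v • D.c l s v ∈ D.cellSpan P) : r = 0 := by
  classical
  rw [cellSpan_eq_span_basis, Module.Basis.mem_span_image] at h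
  funext v
  by_contra hv
  have hrepr : D.basis.repr (∑ w, r w • D.c l s w) ⟨l, (s, v)⟩ = r v := by
    simp [← D.basis_eq, Finsupp.single_apply]
  exact hl (h (Finsupp.mem_support_iff.2 (hrepr ▸ hv)))

theorem eq_zero_of_smul_c_mem_cellSpan {P : Set Λp} {l : Λp} (hl : l ∉ P) {s t : T l} {r : R}
    (h : r • D.c l s t ∈ D.cellSpan P) : r = 0 := by
  classical
  have := D.eq_zero_of_sum_smul_c_mem_cellSpan hl (r := Pi.single t r) (by simpa [ite_smul])
  simpa using congrFun this t

theorem c_mem_cellSpan_iff [Nontrivial R] {P : Set Λp} {l : Λp} {s t : T l} :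
    D.c l s t ∈ D.cellSpan P ↔ l ∈ P := by
  refine ⟨fun h => ?_, fun hl => D.c_mem_cellSpan hl s t⟩
  by_contra hl
  exact one_ne_zero (D.eq_zero_of_smul_c_mem_cellSpan hl (r := 1) (by rwa [one_smul]))

theorem mul_mem_cellSpan_right {P : Set Λp} (hP : IsUpperSet P) (a : A) {x : A}
    (hx : x ∈ D.cellSpan P) : x * a ∈ D.cellSpan P := by
  induction hx using Submodule.span_induction with
  | mem x hx =>
    obtain ⟨l, s, t, hl, rfl⟩ := hx
    rw [← sub_add_cancel (D.c l s t * a) (∑ v, D.coeff l t a v • D.c l s v)]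
    refine add_mem (D.cellSpan_mono (fun _ h => hP (le_of_lt h) hl) (D.mul_rule l s t a)) ?_
    exact sum_mem fun v _ => Submodule.smul_mem _ _ (D.c_mem_cellSpan hl s v)
  | zero => simp
  | add y z _ _ hy hz => rw [add_mul]; exact add_mem hy hz
  | smul r y _ hy => rw [smul_mul_assoc]; exact Submodule.smul_mem _ _ hy

theorem star_star (x : A) : D.star (D.star x) = x := by
  have h : D.star ∘ₗ D.star = LinearMap.id :=
    D.basis.ext fun ⟨l, s, t⟩ => by simp [D.basis_eq, D.star_c]
  exact LinearMap.congr_fun h x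

theorem star_mem_cellSpan {P : Set Λp} {x : A} (hx : x ∈ D.cellSpan P) :
    D.star x ∈ D.cellSpan P := by
  refine (Submodule.span_le (p := (D.cellSpan P).comap D.star)).2 ?_ hx
  rintro _ ⟨l, s, t, hl, rfl⟩
  simpa [D.star_c] using D.c_mem_cellSpan hl t s

theorem mul_mem_cellSpan_left {P : Set Λp} (hP : IsUpperSet P) (a : A) {x : A}
    (hx : x ∈ D.cellSpan P) : a * x ∈ D.cellSpan P := by
  simpa [D.star_mul, D.star_star] using
    D.star_mem_cellSpan (D.mul_mem_cellSpan_right hP (D.star a) (D.star_mem_cellSpan hx))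

theorem coeff_eq_of_sub_mem_Aup {l : Λp} {s t : T l} {a : A} {r : T l → R}
    (h : D.c l s t * a - ∑ v, r v • D.c l s v ∈ D.Aup l) : D.coeff l t a = r := by
  have hdiff := sub_mem h (D.mul_rule l s t a)
  rw [sub_sub_sub_cancel_left, ← Finset.sum_sub_distrib] at hdiff
  simp_rw [← sub_smul] at hdiff
  exact sub_eq_zero.1 (D.eq_zero_of_sum_smul_c_mem_cellSpan Set.self_notMem_Ioi hdiff)

def coeffLinear (l : Λp) (t : T l) : A →ₗ[R] T l → R where
  toFun := D.coeff l t
  map_add' a b := D.coeff_eq_of_sub_mem_Aup (s := t) <| by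
    convert (show _ ∈ D.Aup l from add_mem (D.mul_rule l t t a) (D.mul_rule l t t b)) using 1
    simp only [mul_add, Pi.add_apply, add_smul, Finset.sum_add_distrib]
    abel
  map_smul' r a := D.coeff_eq_of_sub_mem_Aup (s := t) <| by
    convert (show _ ∈ D.Aup l from Submodule.smul_mem _ r (D.mul_rule l t t a)) using 1
    simp [smul_sub, Finset.smul_sum, mul_smul]

theorem coeff_eq_zero_of_mem_cellSpan {P : Set Λp} (hP : IsUpperSet P) {l : Λp} (hl : l ∉ P)
    (t : T l) {a : A} (ha : a ∈ D.cellSpan P) : D.coeff l t a = 0 := by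
  have hQ : IsUpperSet (P ∪ Set.Ioi l) := hP.union (isUpperSet_Ioi l)
  have hprod := D.mul_mem_cellSpan_left hQ (D.c l t t) (D.cellSpan_mono Set.subset_union_left ha)
  have hrem := D.cellSpan_mono (Set.subset_union_right (s := P)) (D.mul_rule l t t a)
  refine D.eq_zero_of_sum_smul_c_mem_cellSpan (P := P ∪ Set.Ioi l) ?_ (s := t) ?_
  · rintro (h | h)
    exacts [hl h, lt_irrefl l h]
  · simpa using sub_mem hprod hrem

section Idem

variable {Λt M X : Type u} [PartialOrder Λt] [PartialOrder X]
  {ι : Λp → Λt} {κ : M → Λt} {e : M → A} {α : Λt → X}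

theorem coeff_eq_zero_of_idem_mul_eq_zero {l : Λp} {t : T l} {μ : M} (hμ : t ∈ D.Tset e l μ)
    {a : A} (ha : e μ * a = 0) : D.coeff l t a = 0 := by
  have h : D.c l t t * a = 0 := by rw [← hμ.1 t, mul_assoc, ha, mul_zero]
  exact D.coeff_eq_of_sub_mem_Aup (s := t) (by simp [h])

variable [Fintype M]

theorem exists_mem_Tset (hA : D.IdemData ι κ e) (l : Λp) (t : T l) : ∃ μ, t ∈ D.Tset e l μ :=
  hA.exists_idem l t

theorem kappa_le_of_mem_Tset [Nontrivial R] (hA : D.IdemData ι κ e) {l : Λp} {t : T l} {μ : M}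
    (ht : t ∈ D.Tset e l μ) : κ μ ≤ ι l := by
  have hP : IsUpperSet {l' | κ μ ≤ ι l'} := fun l₁ l₂ h h₁ => h₁.trans ((hA.order_iff _ _).2 h)
  have hc := D.mul_mem_cellSpan_right hP (D.c l t t) (hA.mem_span μ)
  rwa [ht.2 t, c_mem_cellSpan_iff] at hc

theorem eq_of_mem_Tset [Nontrivial R] (hA : D.IdemData ι κ e) {l : Λp} {t : T l} {μ ν : M}
    (hμ : t ∈ D.Tset e l μ) (hν : t ∈ D.Tset e l ν) : μ = ν := by
  by_contra hne
  apply D.basis.ne_zero ⟨l, (t, t)⟩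
  rw [D.basis_eq, ← hμ.2 t, ← hν.2 t, ← mul_assoc, hA.orth μ ν hne, zero_mul]

theorem mem_Iset_iff [Nontrivial R] (hA : D.IdemData ι κ e) (hα : Monotone α) {l : Λp}
    {t : T l} {μ : M} (hμ : t ∈ D.Tset e l μ) {ε : Bool} :
    t ∈ D.Iset e ι κ α l ε ↔ (α (κ μ) < α (ι l) ↔ ε = true) := by
  have hle : α (κ μ) ≤ α (ι l) := hα (D.kappa_le_of_mem_Tset hA hμ)
  cases ε
  · simp only [Bool.false_eq_true, iff_false]
    refine ⟨fun ⟨ν, hν, h⟩ => ?_, fun h => ⟨μ, hμ, (hle.eq_of_not_lt h).symm⟩⟩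
    rw [D.eq_of_mem_Tset hA hμ hν, h]
    exact lt_irrefl _
  · simp only [iff_true]
    refine ⟨fun ⟨ν, hν, h⟩ => ?_, fun h => ⟨μ, hμ, h⟩⟩
    rwa [D.eq_of_mem_Tset hA hμ hν]

theorem isCompl_Iset [Nontrivial R] (hA : D.IdemData ι κ e) (hα : Monotone α) (l : Λp) :
    IsCompl (D.Iset e ι κ α l false) (D.Iset e ι κ α l true) := by
  suffices h : D.Iset e ι κ α l true = (D.Iset e ι κ α l false)ᶜ from h ▸ isCompl_compl
  ext t
  obtain ⟨μ, hμ⟩ := D.exists_mem_Tset hA l t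
  simp [Set.mem_compl_iff, D.mem_Iset_iff hA hα hμ]

theorem idem_ne_of_mem_Iset [Nontrivial R] (hA : D.IdemData ι κ e) (hα : Monotone α) {l : Λp}
    {ε ε' : Bool} (hne : ε ≠ ε') {s t : T l} (hs : s ∈ D.Iset e ι κ α l ε)
    (ht : t ∈ D.Iset e ι κ α l ε') {μ ν : M} (hμ : s ∈ D.Tset e l μ) (hν : t ∈ D.Tset e l ν) :
    μ ≠ ν := by
  rintro rfl
  exact hne (Bool.eq_iff_iff.2 (((D.mem_Iset_iff hA hα hμ).1 hs).symm.trans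
    ((D.mem_Iset_iff hA hα hν).1 ht)))

theorem form_eq_zero_of_idem_ne (hA : D.IdemData ι κ e) {φ : ∀ l, T l → T l → R}
    (hφ : D.FormData φ) {l : Λp} {s t : T l} {μ ν : M} (hμ : s ∈ D.Tset e l μ)
    (hν : t ∈ D.Tset e l ν) (hne : μ ≠ ν) : φ l s t = 0 := by
  have h := hφ l s t s t
  rw [← hμ.1 s, ← hν.2 t, mul_assoc, ← mul_assoc (e μ), hA.orth μ ν hne, zero_mul, mul_zero,
    zero_sub, neg_mem_iff] at h
  exact D.eq_zero_of_smul_c_mem_cellSpan Set.self_notMem_Ioi h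

theorem form_eq_zero_of_mem_Iset [Nontrivial R] (hA : D.IdemData ι κ e) (hα : Monotone α)
    {φ : ∀ l, T l → T l → R} (hφ : D.FormData φ) {l : Λp} {ε ε' : Bool} (hne : ε ≠ ε')
    {s t : T l} (hs : s ∈ D.Iset e ι κ α l ε) (ht : t ∈ D.Iset e ι κ α l ε') : φ l s t = 0 := by
  obtain ⟨μ, hμ⟩ := D.exists_mem_Tset hA l s
  obtain ⟨ν, hν⟩ := D.exists_mem_Tset hA l t
  exact D.form_eq_zero_of_idem_ne hA hφ hμ hν (D.idem_ne_of_mem_Iset hA hα hne hs ht hμ hν)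

theorem c_mul_idem (hA : D.IdemData ι κ e) {l : Λp} {ν : M}
    [DecidablePred (· ∈ D.Tset e l ν)] (s w : T l) :
    D.c l s w * e ν = if w ∈ D.Tset e l ν then D.c l s w else 0 := by
  split_ifs with hw
  · exact hw.1 s
  · obtain ⟨μ, hμ⟩ := D.exists_mem_Tset hA l w
    have hne : μ ≠ ν := by rintro rfl; exact hw hμ
    rw [← hμ.1 s, mul_assoc, hA.orth μ ν hne, mul_zero]

theorem coeff_eq_zero_of_mul_idem_eq_zero (hA : D.IdemData ι κ e) {l : Λp} (t : T l) {v : T l}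
    {ν : M} (hν : v ∈ D.Tset e l ν) {a : A} (ha : a * e ν = 0) : D.coeff l t a v = 0 := by
  classical
  have h := D.mul_mem_cellSpan_right (isUpperSet_Ioi l) (e ν) (D.mul_rule l t t a)
  simp only [sub_mul, mul_assoc, ha, mul_zero, zero_sub, neg_mem_iff, Finset.sum_mul,
    smul_mul_assoc, D.c_mul_idem hA, smul_ite, smul_zero] at h
  have hr := D.eq_zero_of_sum_smul_c_mem_cellSpan Set.self_notMem_Ioi
    (r := fun w => if w ∈ D.Tset e l ν then D.coeff l t a w else 0) (by simpa [ite_smul] using h)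
  simpa [hν] using congrFun hr v

theorem coeff_c_eq_zero_of_mem_Iset [Nontrivial R] (hA : D.IdemData ι κ e) (hα : Monotone α)
    {l l' : Λp} {ε ε' δ : Bool} (hne : ε ≠ ε') {t v : T l} (ht : t ∈ D.Iset e ι κ α l ε)
    (hv : v ∈ D.Iset e ι κ α l ε') {s' t' : T l'} (hs' : s' ∈ D.Iset e ι κ α l' δ)
    (ht' : t' ∈ D.Iset e ι κ α l' δ) : D.coeff l t (D.c l' s' t') v = 0 := by
  obtain ⟨μ, hμ⟩ := D.exists_mem_Tset hA l t
  obtain ⟨ν, hν⟩ := D.exists_mem_Tset hA l v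
  obtain ⟨μ', hμ'⟩ := D.exists_mem_Tset hA l' s'
  obtain ⟨ν', hν'⟩ := D.exists_mem_Tset hA l' t'
  by_cases hμμ' : μ = μ'
  swap
  · refine congrFun (D.coeff_eq_zero_of_idem_mul_eq_zero hμ ?_) v
    rw [← hμ'.2 t', ← mul_assoc, hA.orth μ μ' hμμ', zero_mul]
  by_cases hνν' : ν = ν'
  swap
  · refine D.coeff_eq_zero_of_mul_idem_eq_zero hA t hν ?_
    rw [← hν'.1 s', mul_assoc, hA.orth ν' ν (Ne.symm hνν'), mul_zero]
  subst hμμ' hνν'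
  -- Exactly one of `α (κ μ)`, `α (κ ν)` equals `α (ι l)`, while both equal `α (ι l')` or both
  -- lie below it; hence the product lands in cells strictly above `l` in the `α`-order.
  have hlt : α (ι l) < α (ι l') := by
    have h₁ := (D.mem_Iset_iff hA hα hμ).1 ht
    have h₂ := (D.mem_Iset_iff hA hα hν).1 hv
    have h₃ := (D.mem_Iset_iff hA hα hμ').1 hs'
    have h₄ := (D.mem_Iset_iff hA hα hν').1 ht'
    have := hα (D.kappa_le_of_mem_Tset hA hμ)
    have := hα (D.kappa_le_of_mem_Tset hA hν)
    have := hα (D.kappa_le_of_mem_Tset hA hμ')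
    have := hα (D.kappa_le_of_mem_Tset hA hν')
    cases ε <;> cases ε' <;> cases δ <;> simp_all <;> order
  have hP : IsUpperSet {l'' | α (ι l) < α (ι l'')} :=
    fun l₁ l₂ h h₁ => h₁.trans_le (hα ((hA.order_iff _ _).2 h))
  exact congrFun (D.coeff_eq_zero_of_mem_cellSpan hP (lt_irrefl _) t
    (D.c_mem_cellSpan hlt s' t')) v

theorem coeff_eq_zero_of_mem_levi [Nontrivial R] (hA : D.IdemData ι κ e) (hα : Monotone α)
    {l : Λp} {ε ε' : Bool} (hne : ε ≠ ε') {t v : T l} (ht : t ∈ D.Iset e ι κ α l ε)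
    (hv : v ∈ D.Iset e ι κ α l ε') {a : A} (ha : a ∈ D.levi e ι κ α) : D.coeff l t a v = 0 := by
  have hker : D.levi e ι κ α ≤ LinearMap.ker (LinearMap.proj v ∘ₗ D.coeffLinear l t) := by
    refine Submodule.span_le.2 ?_
    rintro _ ⟨l', δ, s', t', hs', ht', rfl⟩
    exact D.coeff_c_eq_zero_of_mem_Iset hA hα hne ht hv hs' ht'
  exact hker ha

theorem arrowProdEquivOfIsCompl_Iset_smul_single [Nontrivial R] [∀ l, DecidableEq (T l)]
    [∀ l, Module Aᵐᵒᵖ (T l → R)] (hA : D.IdemData ι κ e) (hα : Monotone α)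
    (hRStd : D.RightStd) {Asub : Subalgebra R A} (hAsub : Asub.toSubmodule = D.levi e ι κ α)
    {l : Λp} [∀ ε, Module Asubᵐᵒᵖ (D.Iset e ι κ α l ε → R)]
    (hZact : ∀ (ε : Bool) (t : D.Iset e ι κ α l ε) (a : Asub),
      op a • (Pi.single t 1 : D.Iset e ι κ α l ε → R) = fun v => D.coeff l t.1 a.1 v.1)
    (a : Asubᵐᵒᵖ) (t : T l) :
    arrowProdEquivOfIsCompl R (D.isCompl_Iset hA hα l) (op (a.unop : A) • Pi.single t 1) =
      a • arrowProdEquivOfIsCompl R (D.isCompl_Iset hA hα l) (Pi.single t 1) := by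
  have hcompl := D.isCompl_Iset hA hα l
  have hlevi : (a.unop : A) ∈ D.levi e ι κ α := hAsub ▸ a.unop.2
  rw [hRStd.2 l t a.unop]
  rcases hcompl.sup_eq_top.ge (Set.mem_univ t) with h | h
  · rw [arrowProdEquivOfIsCompl_single_left hcompl h, Prod.smul_mk, smul_zero]
    exact Prod.ext (hZact false ⟨t, h⟩ a.unop).symm
      (funext fun v => D.coeff_eq_zero_of_mem_levi hA hα (by simp) h v.2 hlevi)
  · rw [arrowProdEquivOfIsCompl_single_right hcompl h, Prod.smul_mk, smul_zero]
    exact Prod.ext (funext fun v => D.coeff_eq_zero_of_mem_levi hA hα (by simp) h v.2 hlevi)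
      (hZact true ⟨t, h⟩ a.unop).symm

end Idem

end CellDatum

theorem stmt_9_general
    {R A : Type u} [CommRing R] [Ring A] [Algebra R A]
    {Λp : Type u} [PartialOrder Λp]
    {T : Λp → Type u} [∀ l, Fintype (T l)] [∀ l, DecidableEq (T l)]
    {Λt M X : Type u} [PartialOrder Λt] [PartialOrder X] [Fintype M]
    (D : CellDatum R A Λp T)
    (ι : Λp → Λt) (κ : M → Λt) (e : M → A)
    (hA : D.IdemData ι κ e)
    (α : Λt → X) (hα : Monotone α)
    -- standard module data for `A`
    [∀ l, Module Aᵐᵒᵖ (T l → R)] (hRStd : D.RightStd)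
    (φ : ∀ l, T l → T l → R) (hφ : D.FormData φ)
    (radW : ∀ l, Submodule Aᵐᵒᵖ (T l → R))
    (hradW : ∀ (l) (x : T l → R), x ∈ radW l ↔ ∀ y, formSum (φ l) x y = 0)
    -- the Levi type subalgebra `A^α` and its standard module data
    (Asub : Subalgebra R A) (hAsub : Asub.toSubmodule = D.levi e ι κ α)
    [∀ (l : Λp) (ε : Bool), Fintype ↥(D.Iset e ι κ α l ε)]
    [∀ (l : Λp) (ε : Bool), Module (↥Asub)ᵐᵒᵖ (↥(D.Iset e ι κ α l ε) → R)]
    (hZsmul : ∀ (l : Λp) (ε : Bool) (r : R) (a : (↥Asub)ᵐᵒᵖ)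
      (x : ↥(D.Iset e ι κ α l ε) → R), a • (r • x) = r • (a • x))
    (hZact : ∀ (l : Λp) (ε : Bool) (t : ↥(D.Iset e ι κ α l ε)) (a : Asub),
      (op a) • (Pi.single t 1 : ↥(D.Iset e ι κ α l ε) → R) =
        fun v => D.coeff l t.1 a.1 v.1)
    (radZ : ∀ (l : Λp) (ε : Bool), Submodule (↥Asub)ᵐᵒᵖ (↥(D.Iset e ι κ α l ε) → R))
    (hradZ : ∀ (l : Λp) (ε : Bool) (x : ↥(D.Iset e ι κ α l ε) → R),
      x ∈ radZ l ε ↔ ∀ y,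
        formSum (fun s t : ↥(D.Iset e ι κ α l ε) => φ l s.1 t.1) x y = 0) :
    ∀ l : Λp,
      letI : Module (↥Asub)ᵐᵒᵖ (T l → R) :=
        Module.compHom _ (RingHom.op Asub.val.toRingHom)
      letI : Module (↥Asub)ᵐᵒᵖ ((T l → R) ⧸ radW l) :=
        Module.compHom _ (RingHom.op Asub.val.toRingHom)
      (∃ F : (T l → R) ≃ₗ[(↥Asub)ᵐᵒᵖ]
          ((↥(D.Iset e ι κ α l false) → R) × (↥(D.Iset e ι κ α l true) → R)),
        (∀ (t : T l) (h : t ∈ D.Iset e ι κ α l false),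
          F (Pi.single t 1) = (Pi.single ⟨t, h⟩ 1, 0)) ∧
        (∀ (t : T l) (h : t ∈ D.Iset e ι κ α l true),
          F (Pi.single t 1) = (0, Pi.single ⟨t, h⟩ 1))) ∧
      Nonempty (((T l → R) ⧸ radW l) ≃ₗ[(↥Asub)ᵐᵒᵖ]
        (((↥(D.Iset e ι κ α l false) → R) ⧸ radZ l false) ×
          ((↥(D.Iset e ι κ α l true) → R) ⧸ radZ l true))) := by
  intro l
  let : Module (↥Asub)ᵐᵒᵖ (T l → R) := Module.compHom _ (RingHom.op Asub.val.toRingHom)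
  let : Module (↥Asub)ᵐᵒᵖ ((T l → R) ⧸ radW l) :=
    Module.compHom _ (RingHom.op Asub.val.toRingHom)
  rcases subsingleton_or_nontrivial R with hR | hR
  · exact ⟨⟨LinearEquiv.ofSubsingleton _ _, fun _ _ => Subsingleton.elim _ _,
      fun _ _ => Subsingleton.elim _ _⟩, ⟨LinearEquiv.ofSubsingleton _ _⟩⟩
  have hcompl := D.isCompl_Iset hA hα l
  let E := arrowProdEquivOfIsCompl R hcompl
  have : SMulCommClass Asubᵐᵒᵖ R (T l → R) := ⟨fun _ r x => hRStd.1 l r _ x⟩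
  have (ε : Bool) : SMulCommClass Asubᵐᵒᵖ R (D.Iset e ι κ α l ε → R) :=
    ⟨fun a r x => hZsmul l ε r a x⟩
  let F : (T l → R) ≃ₗ[Asubᵐᵒᵖ] _ :=
    { E with map_smul' := E.toLinearMap.map_smul_of_map_smul_single <|
        D.arrowProdEquivOfIsCompl_Iset_smul_single hA hα hRStd hAsub (hZact l) }
  have hrad (x : T l → R) : x ∈ radW l ↔ (F x).1 ∈ radZ l false ∧ (F x).2 ∈ radZ l true := by
    rw [hradW, hradZ, hradZ]
    exact forall_formSum_eq_zero_iff_of_isCompl hcompl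
      (fun s hs t ht => ⟨D.form_eq_zero_of_mem_Iset hA hα hφ (by simp) hs ht,
        D.form_eq_zero_of_mem_Iset hA hα hφ (by simp) ht hs⟩) x
  let f := ((radZ l false).mkQ.prodMap (radZ l true).mkQ).comp F.toLinearMap
  refine ⟨⟨F, fun t h => arrowProdEquivOfIsCompl_single_left hcompl h,
    fun t h => arrowProdEquivOfIsCompl_single_right hcompl h⟩,
    ⟨Submodule.quotientCompHomEquiv _ (radW l) f.toAddMonoidHom ?_ ?_ f.map_smul⟩⟩
  · exact (Submodule.mkQ_surjective _).prodMap (Submodule.mkQ_surjective _) |>.comp F.surjective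
  · intro x
    simp [f, hrad x, Prod.ext_iff]

/-- regarding `A`-modules as `A^α`-modules by restriction, the standard
module `W^λ` decomposes as `Z^{(λ,0)} ⊕ Z^{(λ,1)}` via `c^λ_t ↦ c^{(λ,ε)}_t` for
`t ∈ I(λ,ε)`, and `L^λ ≅ L^{(λ,0)} ⊕ L^{(λ,1)}` as `A^α`-modules. -/
theorem stmt_9
    {R A : Type u} [CommRing R] [Ring A] [Algebra R A]
    {Λp : Type u} [PartialOrder Λp] [Fintype Λp]
    {T : Λp → Type u} [∀ l, Fintype (T l)] [∀ l, DecidableEq (T l)]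
    {Λt M X : Type u} [PartialOrder Λt] [PartialOrder X] [Fintype M]
    (D : CellDatum R A Λp T)
    (ι : Λp → Λt) (κ : M → Λt) (e : M → A)
    (hA : D.IdemData ι κ e)
    (α : Λt → X) (hα : Monotone α)
    -- standard module data for `A`
    [∀ l, Module Aᵐᵒᵖ (T l → R)] (hRStd : D.RightStd)
    (φ : ∀ l, T l → T l → R) (hφ : D.FormData φ)
    (radW : ∀ l, Submodule Aᵐᵒᵖ (T l → R))
    (hradW : ∀ (l) (x : T l → R), x ∈ radW l ↔ ∀ y, formSum (φ l) x y = 0)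
    -- the Levi type subalgebra `A^α` and its standard module data
    (Asub : Subalgebra R A) (hAsub : Asub.toSubmodule = D.levi e ι κ α)
    [∀ (l : Λp) (ε : Bool), Fintype ↥(D.Iset e ι κ α l ε)]
    [∀ (l : Λp) (ε : Bool), Module (↥Asub)ᵐᵒᵖ (↥(D.Iset e ι κ α l ε) → R)]
    (hZsmul : ∀ (l : Λp) (ε : Bool) (r : R) (a : (↥Asub)ᵐᵒᵖ)
      (x : ↥(D.Iset e ι κ α l ε) → R), a • (r • x) = r • (a • x))
    (hZact : ∀ (l : Λp) (ε : Bool) (t : ↥(D.Iset e ι κ α l ε)) (a : Asub),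
      (op a) • (Pi.single t 1 : ↥(D.Iset e ι κ α l ε) → R) =
        fun v => D.coeff l t.1 a.1 v.1)
    (radZ : ∀ (l : Λp) (ε : Bool), Submodule (↥Asub)ᵐᵒᵖ (↥(D.Iset e ι κ α l ε) → R))
    (hradZ : ∀ (l : Λp) (ε : Bool) (x : ↥(D.Iset e ι κ α l ε) → R),
      x ∈ radZ l ε ↔ ∀ y,
        formSum (fun s t : ↥(D.Iset e ι κ α l ε) => φ l s.1 t.1) x y = 0) :
    ∀ l : Λp,
      letI : Module (↥Asub)ᵐᵒᵖ (T l → R) :=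
        Module.compHom _ (RingHom.op Asub.val.toRingHom)
      letI : Module (↥Asub)ᵐᵒᵖ ((T l → R) ⧸ radW l) :=
        Module.compHom _ (RingHom.op Asub.val.toRingHom)
      (∃ F : (T l → R) ≃ₗ[(↥Asub)ᵐᵒᵖ]
          ((↥(D.Iset e ι κ α l false) → R) × (↥(D.Iset e ι κ α l true) → R)),
        (∀ (t : T l) (h : t ∈ D.Iset e ι κ α l false),
          F (Pi.single t 1) = (Pi.single ⟨t, h⟩ 1, 0)) ∧
        (∀ (t : T l) (h : t ∈ D.Iset e ι κ α l true),
          F (Pi.single t 1) = (0, Pi.single ⟨t, h⟩ 1))) ∧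
      Nonempty (((T l → R) ⧸ radW l) ≃ₗ[(↥Asub)ᵐᵒᵖ]
        (((↥(D.Iset e ι κ α l false) → R) ⧸ radZ l false) ×
          ((↥(D.Iset e ι κ α l true) → R) ⧸ radZ l true))) :=
  stmt_9_general D ι κ e hA α hα hRStd φ hφ radW hradW Asub hAsub hZsmul hZact radZ hradZ
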